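/- Under the standing hypotheses (G is a finite simple C4-free graph, a, b : V(G) → ℕ satisfy a(x) ≥ 2 and b(x) ≥ 2 for all x, d_G(x) = a(x) + b(x) − 1 for every vertex x, and G has no feasible pair), let (A, B) ∈ 𝒫 and let u1 ~ u ~ v ~ v1 be a special path, i.e., u ∈ A*, v ∈ B*, u1 is an a-vertex in A adjacent to u, v1 is a b-vertex in B adjacent to v, and u is adjacent to v. Then either u1v ∈ E(G) or v1u ∈ E(G). -/

import Mathlib

open Finset
open scoped Classical

variable {V : Type*}

/-- `nbrIn G A x` is the number of neighbors of `x` lying in `A`, i.e. `d_A(x)`. -/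
noncomputable def nbrIn (G : SimpleGraph V) (A : Finset V) (x : V) : ℕ :=
  (A.filter fun y => G.Adj x y).card

/-- `G` contains no cycle of length four: there are no four distinct vertices
`w,x,y,z` with `wx, xy, yz, zw` all edges. -/
def C4Free (G : SimpleGraph V) : Prop :=
  ∀ w x y z : V, w ≠ x → w ≠ y → w ≠ z → x ≠ y → x ≠ z → y ≠ z →
    ¬(G.Adj w x ∧ G.Adj x y ∧ G.Adj y z ∧ G.Adj z w)

/-- `A` is `f`-good: every vertex of `A` has at least `f u` neighbors in `A`. -/
def IsGood (G : SimpleGraph V) (f : V → ℕ) (A : Finset V) : Prop :=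
  ∀ u ∈ A, f u ≤ nbrIn G A u

/-- `A` is `g`-degenerate: every non-empty subset `H ⊆ A` has a vertex `u`
with `d_H(u) ≤ g u`. -/
def IsDegenerate (G : SimpleGraph V) (g : V → ℤ) (A : Finset V) : Prop :=
  ∀ H ⊆ A, H.Nonempty → ∃ u ∈ H, (nbrIn G H u : ℤ) ≤ g u

/-- `(A,B)` is a partition of the vertex set: disjoint, non-empty, covering. -/
def IsPartition [Fintype V] (A B : Finset V) : Prop :=
  Disjoint A B ∧ A.Nonempty ∧ B.Nonempty ∧ A ∪ B = Finset.univ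

/-- `(A,B)` is a feasible pair: disjoint non-empty sets with `A` being `a`-good
and `B` being `b`-good. -/
def FeasiblePair (G : SimpleGraph V) (a b : V → ℕ) (A B : Finset V) : Prop :=
  Disjoint A B ∧ A.Nonempty ∧ B.Nonempty ∧ IsGood G a A ∧ IsGood G b B

/-- `(A,B)` is an `(a,b)`-partition: a partition with `A` being `(a-1)`-degenerate
and `B` being `(b-1)`-degenerate. -/
def ABPartition [Fintype V] (G : SimpleGraph V) (a b : V → ℕ) (A B : Finset V) : Prop :=
  IsPartition A B ∧ IsDegenerate G (fun x => (a x : ℤ) - 1) A ∧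
    IsDegenerate G (fun x => (b x : ℤ) - 1) B

/-- The number of edges of the subgraph of `G` induced on `A`. -/
noncomputable def edgesIn (G : SimpleGraph V) (A : Finset V) : ℕ :=
  ((A ×ˢ A).filter fun p => G.Adj p.1 p.2).card / 2

/-- The weight `w(A,B) = |E(G[A])| + |E(G[B])| + Σ_{x∈A} b(x) + Σ_{x∈B} a(x)`. -/
noncomputable def weight (G : SimpleGraph V) (a b : V → ℕ) (A B : Finset V) : ℕ :=
  edgesIn G A + edgesIn G B + ∑ x ∈ A, b x + ∑ x ∈ B, a x

/-- `(A,B)` belongs to `𝒫`: it is an `(a,b)`-partition of maximum weight among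
all `(a,b)`-partitions. -/
def MaxAB [Fintype V] (G : SimpleGraph V) (a b : V → ℕ) (A B : Finset V) : Prop :=
  ABPartition G a b A B ∧
    ∀ A' B' : Finset V, ABPartition G a b A' B' → weight G a b A' B' ≤ weight G a b A B

/-- `starSet G f A` is `A* = {x ∈ A : d_A(x) ≤ f(x) - 1}`. -/
noncomputable def starSet (G : SimpleGraph V) (f : V → ℕ) (A : Finset V) : Finset V :=
  A.filter fun x => nbrIn G A x < f x

/- Suppose neither `u₁v` nor `v₁u` is an edge; then `u₁v₁` is not an edge either, since `u₁uvv₁`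
would be a `C₄`. Swapping `u` and `v` yields a partition `(A', B')` of at least the same weight,
because each of `u`, `v` has more neighbours on the other side than on its own. It is again an
`(a,b)`-partition: by maximality, moving `u` alone into `B` must create a `b`-good set, and this set
together with an `a`-good subset of `A'` would be a feasible pair unless both contain `v`, which
overloads the degree of `v`. In `(A', B')` the vertices `u₁` and `v₁` lie in `A'*` and `B'*`. But in
a maximum-weight partition every vertex of `A*` is adjacent to every vertex of `B*`: moving either
one across creates a good set on the other side, and for non-adjacent vertices these two good sets
are disjoint.
-/

section Neighbours

variable {G : SimpleGraph V} {A B H S : Finset V} {x y : V}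

lemma nbrIn_mono (h : A ⊆ B) (x : V) : nbrIn G A x ≤ nbrIn G B x :=
  card_le_card (filter_subset_filter _ h)

lemma nbrIn_insert_of_adj (hxy : G.Adj x y) (hy : y ∉ A) :
    nbrIn G (insert y A) x = nbrIn G A x + 1 := by
  rw [nbrIn, filter_insert, if_pos hxy, card_insert_of_notMem fun h => hy (mem_filter.1 h).1]
  rfl

lemma nbrIn_insert_of_not_adj (hxy : ¬ G.Adj x y) : nbrIn G (insert y A) x = nbrIn G A x := by
  rw [nbrIn, filter_insert, if_neg hxy]
  rfl

lemma nbrIn_erase_of_adj (hy : y ∈ A) (hxy : G.Adj x y) :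
    nbrIn G (A.erase y) x + 1 = nbrIn G A x := by
  rw [nbrIn, filter_erase]
  exact card_erase_add_one (mem_filter.2 ⟨hy, hxy⟩)

lemma nbrIn_erase_self (A : Finset V) (x : V) : nbrIn G (A.erase x) x = nbrIn G A x := by
  rw [nbrIn, filter_erase, erase_eq_of_notMem fun h => G.loopless.irrefl x (mem_filter.1 h).2]
  rfl

lemma nbrIn_add_nbrIn_le_degree [Fintype V] (h : ∀ y ∈ H, y ∈ S → y = x) :
    nbrIn G H x + nbrIn G S x ≤ G.degree x := by
  have hdisj : Disjoint (H.filter (G.Adj x)) (S.filter (G.Adj x)) := by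
    refine disjoint_left.2 fun y hyH hyS => ?_
    rw [mem_filter] at hyH hyS
    obtain rfl := h y hyH.1 hyS.1
    exact G.loopless.irrefl y hyH.2
  rw [nbrIn, nbrIn, ← card_union_of_disjoint hdisj, ← G.card_neighborFinset_eq_degree]
  refine card_le_card fun y hy => ?_
  rw [← filter_union, mem_filter] at hy
  simpa using hy.2

lemma nbrIn_add_nbrIn_eq_degree [Fintype V] (hp : IsPartition A B) (x : V) :
    nbrIn G A x + nbrIn G B x = G.degree x := by
  obtain ⟨hdisj, -, -, hU⟩ := hp
  rw [nbrIn, nbrIn, ← card_union_of_disjoint (disjoint_filter_filter hdisj), ← filter_union, hU,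
    ← G.card_neighborFinset_eq_degree]
  congr 1
  ext y
  simp

lemma card_adj_filter_product (A : Finset V) :
    ((A ×ˢ A).filter fun p => G.Adj p.1 p.2).card = ∑ x ∈ A, nbrIn G A x := by
  rw [card_filter, sum_product]
  exact sum_congr rfl fun x _ => (card_filter _ _).symm

lemma edgesIn_insert (hx : x ∉ A) : edgesIn G (insert x A) = edgesIn G A + nbrIn G A x := by
  have hnbr : ∑ y ∈ A, nbrIn G (insert x A) y = ∑ y ∈ A, nbrIn G A y + nbrIn G A x := by
    rw [nbrIn, card_filter, ← sum_add_distrib]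
    refine sum_congr rfl fun y _ => ?_
    by_cases hxy : G.Adj y x
    · rw [nbrIn_insert_of_adj hxy hx, if_pos hxy.symm]
    · rw [nbrIn_insert_of_not_adj hxy, if_neg fun h => hxy h.symm, add_zero]
  have hself : nbrIn G (insert x A) x = nbrIn G A x :=
    nbrIn_insert_of_not_adj (G.loopless.irrefl x)
  rw [edgesIn, edgesIn, card_adj_filter_product, card_adj_filter_product, sum_insert hx, hself,
    hnbr]
  omega

end Neighbours

section Partitions

variable {G : SimpleGraph V} {a b : V → ℕ} {A B H : Finset V} {x : V}

lemma weight_comm (G : SimpleGraph V) (a b : V → ℕ) (A B : Finset V) :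
    weight G a b A B = weight G b a B A := by
  unfold weight
  ring

lemma weight_erase_insert (hxA : x ∈ A) (hxB : x ∉ B) :
    weight G a b (A.erase x) (insert x B) + nbrIn G A x + b x =
      weight G a b A B + nbrIn G B x + a x := by
  have hA := edgesIn_insert (G := G) (notMem_erase x A)
  rw [insert_erase hxA, nbrIn_erase_self] at hA
  have hsum := sum_erase_add A b hxA
  rw [weight, weight, edgesIn_insert hxB, sum_insert hxB]
  omega

lemma IsPartition.symm [Fintype V] (hp : IsPartition A B) : IsPartition B A := by
  obtain ⟨hdisj, hA, hB, hU⟩ := hp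
  exact ⟨hdisj.symm, hB, hA, union_comm A B ▸ hU⟩

lemma IsPartition.erase_insert [Fintype V] (hp : IsPartition A B) (hx : x ∈ A)
    (hne : (A.erase x).Nonempty) : IsPartition (A.erase x) (insert x B) := by
  obtain ⟨hdisj, -, -, hU⟩ := hp
  refine ⟨disjoint_insert_right.2 ⟨notMem_erase x A, disjoint_of_subset_left (erase_subset x A)
    hdisj⟩, hne, insert_nonempty x B, ?_⟩
  rw [union_insert, ← insert_union, insert_erase hx, hU]

lemma ABPartition.symm [Fintype V] (h : ABPartition G a b A B) : ABPartition G b a B A :=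
  ⟨h.1.symm, h.2.2, h.2.1⟩

lemma MaxAB.symm [Fintype V] (h : MaxAB G a b A B) : MaxAB G b a B A := by
  refine ⟨h.1.symm, fun A' B' h' => ?_⟩
  rw [weight_comm G b a A' B', weight_comm G b a B A]
  exact h.2 B' A' h'.symm

lemma FeasiblePair.symm (h : FeasiblePair G a b A B) : FeasiblePair G b a B A :=
  ⟨h.1.symm, h.2.2.1, h.2.1, h.2.2.2.2, h.2.2.2.1⟩

lemma IsDegenerate.mono {g : V → ℤ} (h : IsDegenerate G g A) (hHA : H ⊆ A) :
    IsDegenerate G g H :=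
  fun K hKH => h K (hKH.trans hHA)

lemma not_isDegenerate_iff {f : V → ℕ} :
    ¬ IsDegenerate G (fun x => (f x : ℤ) - 1) A ↔ ∃ H ⊆ A, H.Nonempty ∧ IsGood G f H := by
  simp only [IsDegenerate, IsGood, not_forall, not_exists, not_and, not_le, exists_prop]
  refine exists_congr fun H => and_congr_right fun _ => and_congr_right fun _ =>
    forall₂_congr fun y _ => ?_
  omega

lemma IsGood.notMem_of_nbrIn_lt {f : V → ℕ} {X : Finset V} (hH : IsGood G f H) (hHX : H ⊆ X)
    (hx : nbrIn G X x < f x) : x ∉ H :=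
  fun hxH => ((hH x hxH).trans (nbrIn_mono hHX x)).not_gt hx

end Partitions

section MaximumWeight

variable [Fintype V] {G : SimpleGraph V} {a b : V → ℕ} {A B : Finset V} {u v : V}

/-- Sharing only `v` would give `v` at least `a v + b v` neighbours. -/
lemma exists_mem_inter_ne (hdeg : ∀ x, G.degree x + 1 = a x + b x)
    (hnf : ¬ ∃ A B : Finset V, FeasiblePair G a b A B) {H S : Finset V} (hH : IsGood G a H)
    (hS : IsGood G b S) (hHne : H.Nonempty) (hSne : S.Nonempty) (v : V) :
    ∃ y ∈ H, y ∈ S ∧ y ≠ v := by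
  by_contra! h
  by_cases hv : v ∈ H ∧ v ∈ S
  · have := nbrIn_add_nbrIn_le_degree (G := G) h
    have := hH v hv.1
    have := hS v hv.2
    have := hdeg v
    omega
  · refine hnf ⟨H, S, disjoint_left.2 fun y hyH hyS => ?_, hHne, hSne, hH, hS⟩
    obtain rfl := h y hyH hyS
    exact hv ⟨hyH, hyS⟩

lemma MaxAB.not_isDegenerate_insert (hdeg : ∀ x, G.degree x + 1 = a x + b x)
    (hAB : MaxAB G a b A B) (hu : u ∈ starSet G a A) (hne : (A.erase u).Nonempty) :
    ¬ IsDegenerate G (fun x => (b x : ℤ) - 1) (insert u B) := by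
  obtain ⟨⟨hp, hAdeg, -⟩, hmax⟩ := hAB
  obtain ⟨huA, hlt⟩ := mem_filter.1 hu
  intro hBdeg
  -- moving `u` into `B` changes the weight by `2 (a u - d_A(u)) - 1 > 0`
  have hle := hmax _ _ ⟨hp.erase_insert huA hne, hAdeg.mono (erase_subset u A), hBdeg⟩
  have hmove := weight_erase_insert (G := G) (a := a) (b := b) huA
    (disjoint_left.1 hp.1 huA)
  have := nbrIn_add_nbrIn_eq_degree (G := G) hp u
  have := hdeg u
  omega

theorem MaxAB.adj_of_mem_starSet (hdeg : ∀ x, G.degree x + 1 = a x + b x)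
    (hnf : ¬ ∃ A B : Finset V, FeasiblePair G a b A B) (hAB : MaxAB G a b A B)
    (hu : u ∈ starSet G a A) (hv : v ∈ starSet G b B) (hA : (A.erase u).Nonempty)
    (hB : (B.erase v).Nonempty) : G.Adj u v := by
  by_contra huv
  obtain ⟨S, hSB, hSne, hS⟩ := not_isDegenerate_iff.1 (hAB.not_isDegenerate_insert hdeg hu hA)
  obtain ⟨T, hTA, hTne, hT⟩ := not_isDegenerate_iff.1
    (hAB.symm.not_isDegenerate_insert (fun x => (hdeg x).trans (add_comm _ _)) hv hB)
  have huT : u ∉ T := hT.notMem_of_nbrIn_lt hTA <| by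
    rw [nbrIn_insert_of_not_adj huv]
    exact (mem_filter.1 hu).2
  have hvS : v ∉ S := hS.notMem_of_nbrIn_lt hSB <| by
    rw [nbrIn_insert_of_not_adj fun h => huv h.symm]
    exact (mem_filter.1 hv).2
  refine hnf ⟨T, S, disjoint_left.2 fun z hzT hzS => ?_, hTne, hSne, hT, hS⟩
  have hzA := (mem_insert.1 (hTA hzT)).resolve_left fun h => hvS (h ▸ hzS)
  have hzB := (mem_insert.1 (hSB hzS)).resolve_left fun h => huT (h ▸ hzT)
  exact disjoint_left.1 hAB.1.1.1 hzA hzB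

lemma MaxAB.isDegenerate_insert_erase (hdeg : ∀ x, G.degree x + 1 = a x + b x)
    (hnf : ¬ ∃ A B : Finset V, FeasiblePair G a b A B) (hAB : MaxAB G a b A B)
    (hu : u ∈ starSet G a A) (hne : (A.erase u).Nonempty) (v : V) :
    IsDegenerate G (fun x => (a x : ℤ) - 1) (insert v (A.erase u)) := by
  by_contra hH
  obtain ⟨H, hHA, hHne, hH⟩ := not_isDegenerate_iff.1 hH
  obtain ⟨S, hSB, hSne, hS⟩ := not_isDegenerate_iff.1 (hAB.not_isDegenerate_insert hdeg hu hne)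
  obtain ⟨y, hyH, hyS, hyv⟩ := exists_mem_inter_ne hdeg hnf hH hS hHne hSne v
  have hyA := (mem_insert.1 (hHA hyH)).resolve_left hyv
  rcases mem_insert.1 (hSB hyS) with rfl | hyB
  · exact notMem_erase y A hyA
  · exact disjoint_left.1 hAB.1.1.1 (mem_of_mem_erase hyA) hyB

theorem MaxAB.swap (hdeg : ∀ x, G.degree x + 1 = a x + b x)
    (hnf : ¬ ∃ A B : Finset V, FeasiblePair G a b A B) (hAB : MaxAB G a b A B)
    (hu : u ∈ starSet G a A) (hv : v ∈ starSet G b B) (huv : G.Adj u v)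
    (hA : (A.erase u).Nonempty) (hB : (B.erase v).Nonempty) :
    MaxAB G a b (insert v (A.erase u)) ((insert u B).erase v) := by
  have hdeg' : ∀ x, G.degree x + 1 = b x + a x := fun x => (hdeg x).trans (add_comm _ _)
  have hnf' : ¬ ∃ B A : Finset V, FeasiblePair G b a B A :=
    fun ⟨B, A, h⟩ => hnf ⟨A, B, h.symm⟩
  obtain ⟨huA, hlu⟩ := mem_filter.1 hu
  obtain ⟨hvB, hlv⟩ := mem_filter.1 hv
  have hp := hAB.1.1
  have huB : u ∉ B := disjoint_left.1 hp.1 huA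
  have hvA : v ∉ A.erase u := fun h => disjoint_left.1 hp.1 (mem_of_mem_erase h) hvB
  have hp' := ((hp.erase_insert huA hA).symm.erase_insert (mem_insert_of_mem hvB)
    ⟨u, mem_erase.2 ⟨huv.ne, mem_insert_self u B⟩⟩).symm
  have hBdeg := hAB.symm.isDegenerate_insert_erase hdeg' hnf' hv hB u
  rw [← erase_insert_of_ne huv.ne] at hBdeg
  refine ⟨⟨hp', hAB.isDegenerate_insert_erase hdeg hnf hu hA v, hBdeg⟩,
    fun A' B' h => (hAB.2 A' B' h).trans ?_⟩
  -- the swap is the move of `u` into `B` followed by the move of `v` into `A.erase u`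
  have hmove_u := weight_erase_insert (G := G) (a := a) (b := b) huA huB
  have hmove_v := weight_erase_insert (G := G) (a := b) (b := a)
    (mem_insert_of_mem (s := B) (b := u) hvB) hvA
  rw [weight_comm G b a, weight_comm G b a] at hmove_v
  rw [nbrIn_insert_of_adj huv.symm huB] at hmove_v
  have := nbrIn_erase_of_adj huA huv.symm
  have := nbrIn_add_nbrIn_eq_degree (G := G) hp u
  have := nbrIn_add_nbrIn_eq_degree (G := G) hp v
  have := hdeg u
  have := hdeg v
  omega

end MaximumWeight

theorem special_path_general [Fintype V] (G : SimpleGraph V) (a b : V → ℕ)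
    (hC4 : C4Free G)
    (hdeg : ∀ x : V, G.degree x + 1 = a x + b x)
    (hnf : ¬ ∃ A B : Finset V, FeasiblePair G a b A B)
    (A B : Finset V) (hAB : MaxAB G a b A B)
    (u v u1 v1 : V)
    (hu : u ∈ starSet G a A) (hv : v ∈ starSet G b B)
    (hu1 : u1 ∈ A) (hu1deg : nbrIn G A u1 = a u1) (hu1u : G.Adj u1 u)
    (hv1 : v1 ∈ B) (hv1deg : nbrIn G B v1 = b v1) (hvv1 : G.Adj v v1)
    (huv : G.Adj u v) :
    G.Adj u1 v ∨ G.Adj v1 u := by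
  by_contra! ⟨hu1v, hv1u⟩
  have huA := (mem_filter.1 hu).1
  have hvB := (mem_filter.1 hv).1
  have hne := disjoint_iff_ne.1 hAB.1.1.1
  have hu1v1 : ¬ G.Adj u1 v1 := fun h => hC4 u1 u v v1 hu1u.ne (hne _ hu1 _ hvB)
    (hne _ hu1 _ hv1) huv.ne (hne _ huA _ hv1) hvv1.ne ⟨hu1u, huv, hvv1, h.symm⟩
  have hu1A : u1 ∈ A.erase u := mem_erase.2 ⟨hu1u.ne, hu1⟩
  have hv1B : v1 ∈ B.erase v := mem_erase.2 ⟨hvv1.ne', hv1⟩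
  have hu1' : u1 ∈ starSet G a (insert v (A.erase u)) := by
    refine mem_filter.2 ⟨mem_insert_of_mem hu1A, ?_⟩
    have := nbrIn_erase_of_adj huA hu1u
    rw [nbrIn_insert_of_not_adj hu1v]
    omega
  have hv1' : v1 ∈ starSet G b ((insert u B).erase v) := by
    rw [erase_insert_of_ne huv.ne]
    refine mem_filter.2 ⟨mem_insert_of_mem hv1B, ?_⟩
    have := nbrIn_erase_of_adj hvB hvv1.symm
    rw [nbrIn_insert_of_not_adj hv1u]
    omega
  refine hu1v1 ((hAB.swap hdeg hnf hu hv huv ⟨u1, hu1A⟩ ⟨v1, hv1B⟩).adj_of_mem_starSet hdeg hnf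
    hu1' hv1' ?_ ?_)
  · exact ⟨v, mem_erase.2 ⟨(hne _ hu1 _ hvB).symm, mem_insert_self v _⟩⟩
  · exact ⟨u, mem_erase.2 ⟨hne _ huA _ hv1, mem_erase.2 ⟨huv.ne, mem_insert_self u B⟩⟩⟩

/-- Claim 10: for any `(A,B) ∈ 𝒫` and any special path `u₁ ~ u ~ v ~ v₁` (with `u ∈ A*`,
`v ∈ B*`, `u₁` an `a`-vertex in `A`, `v₁` a `b`-vertex in `B`), either `u₁v ∈ E(G)` or
`v₁u ∈ E(G)`. -/
theorem special_path [Fintype V] (G : SimpleGraph V) (a b : V → ℕ)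
    (hC4 : C4Free G) (ha : ∀ x : V, 2 ≤ a x) (hb : ∀ x : V, 2 ≤ b x)
    (hdeg : ∀ x : V, G.degree x + 1 = a x + b x)
    (hnf : ¬ ∃ A B : Finset V, FeasiblePair G a b A B)
    (A B : Finset V) (hAB : MaxAB G a b A B)
    (u v u1 v1 : V)
    (hu : u ∈ starSet G a A) (hv : v ∈ starSet G b B)
    (hu1 : u1 ∈ A) (hu1deg : nbrIn G A u1 = a u1) (hu1u : G.Adj u1 u)
    (hv1 : v1 ∈ B) (hv1deg : nbrIn G B v1 = b v1) (hvv1 : G.Adj v v1)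
    (huv : G.Adj u v) :
    G.Adj u1 v ∨ G.Adj v1 u :=
  special_path_general G a b hC4 hdeg hnf A B hAB u v u1 v1 hu hv hu1 hu1deg hu1u hv1 hv1deg hvv1
    huv
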